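/- In a finitely complete and finitely cocomplete monoidal biclosed category V with projective unit, let Q be a cyclic object (i.e., the functors {-, Q} and [-, Q] are naturally isomorphic; write [[-, Q]] for this functor) such that [[-, Q]] : V^op → V is conservative and preserves regular epimorphisms. Then a morphism f : X → Y is left pure if and only if it is right pure, and both hold if and only if [[f, Q]] : [[Y, Q]] → [[X, Q]] is a split epimorphism. -/

import Mathlib

/-!
Write `{f, Q}` for `(pre f).app Q`. Everything turns on the condition that `{f, Q}` is a split
epimorphism, which by adjunction says that every map `X ⊗ W ⟶ Q` extends along `f ▷ W`.

Maps into `Q` extend along every regular monomorphism `h`: `{h, Q} ≅ [[h, Q]]` is a regular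
epimorphism, and the unit is projective. Hence right purity implies the condition, and so does
left purity, because cyclicity identifies maps `X ⊗ W ⟶ Q` with maps `W ⊗ X ⟶ Q`, naturally in
`X`. Conversely the condition passes from `f` to `f ▷ Z` and `Z ◁ f` (associativity, and
cyclicity once more), and it forces a morphism `g` to be a regular monomorphism: factor `g = k ≫ m`
through the equalizer `m` of its cokernel pair. Since `- ⊗ T` preserves that pushout, `{m, Q}`
coequalizes every pair that `{g, Q}` does; with a section `s` of `{g, Q}` this makes `s ≫ {m, Q}`
an inverse of `{k, Q}`, as `{m, Q}` is epi. So `k` is an isomorphism by conservativity.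
-/

open CategoryTheory CategoryTheory.Limits CategoryTheory.MonoidalCategory
  CategoryTheory.MonoidalClosed Opposite

section Category

variable {C : Type*} [Category C]

def ExtendsAlong (Q : C) {A B : C} (h : A ⟶ B) : Prop :=
  Function.Surjective fun χ : B ⟶ Q => h ≫ χ

lemma ExtendsAlong.of_iso {Q A B A' B' : C} {g : A ⟶ B} {g' : A' ⟶ B'}
    (hg : ExtendsAlong Q g) (eA : A ≅ A') (eB : B ≅ B') (w : g ≫ eB.hom = eA.hom ≫ g') :
    ExtendsAlong Q g' := by
  intro χ
  obtain ⟨χ', hχ' : g ≫ χ' = _⟩ := hg (eA.hom ≫ χ)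
  refine ⟨eB.inv ≫ χ', ?_⟩
  rw [← cancel_epi eA.hom, ← reassoc_of% w, eB.hom_inv_id_assoc, hχ']

lemma CategoryTheory.NatIso.isSplitEpi_map_iff {D : Type*} [Category D] {F G : C ⥤ D}
    (e : F ≅ G) {X Y : C} (k : X ⟶ Y) : IsSplitEpi (F.map k) ↔ IsSplitEpi (G.map k) := by
  suffices ∀ {F G : C ⥤ D} (e : F ≅ G), IsSplitEpi (F.map k) → IsSplitEpi (G.map k) from
    ⟨this e, this e.symm⟩
  intro F G e _
  rw [← NatIso.naturality_1 e k]
  infer_instance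

end Category

section MonoidalClosed

variable {V : Type*} [Category V] [MonoidalCategory V] [MonoidalClosed V] {Q : V}

lemma curry'_comp_pre_app {A B : V} (h : A ⟶ B) (χ : B ⟶ Q) :
    curry' χ ≫ (pre h).app Q = curry' (h ≫ χ) := by
  rw [curry', curry_pre_app, curry', rightUnitor_naturality_assoc]

lemma extendsAlong_iff_surjective_pre_app {A B : V} (h : A ⟶ B) :
    ExtendsAlong Q h ↔
      Function.Surjective fun g : 𝟙_ V ⟶ (ihom B).obj Q => g ≫ (pre h).app Q := by
  have hcomm : (fun g => g ≫ (pre h).app Q) ∘ curryHomEquiv' =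
      curryHomEquiv' ∘ fun χ : B ⟶ Q => h ≫ χ :=
    funext (curry'_comp_pre_app h)
  rw [ExtendsAlong, ← Equiv.comp_surjective _ curryHomEquiv', ← hcomm, Equiv.surjective_comp]

lemma isSplitEpi_pre_app_iff {A B : V} (h : A ⟶ B) :
    IsSplitEpi ((pre h).app Q) ↔ ∀ W : V, ExtendsAlong Q (h ▷ W) := by
  constructor
  · intro _ W φ
    refine ⟨uncurry (curry φ ≫ section_ ((pre h).app Q)), ?_⟩
    dsimp only
    rw [← uncurry_pre_app, Category.assoc, IsSplitEpi.id, Category.comp_id, uncurry_curry]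
  · intro hext
    obtain ⟨ψ, hψ : h ▷ _ ≫ ψ = _⟩ := hext ((ihom A).obj Q) ((ihom.ev A).app Q)
    exact ⟨⟨curry ψ, by rw [curry_pre_app, hψ, ← uncurry_id_eq_ev, curry_uncurry]⟩⟩

lemma isSplitEpi_pre_app_whiskerRight {X Y : V} (f : X ⟶ Y) (hf : IsSplitEpi ((pre f).app Q))
    (Z : V) : IsSplitEpi ((pre (f ▷ Z)).app Q) := by
  rw [isSplitEpi_pre_app_iff] at hf ⊢
  exact fun W => (hf (Z ⊗ W)).of_iso (α_ X Z W).symm (α_ Y Z W).symm (by simp)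

lemma comp_pre_app_eq_of_isPushout {A B P E T : V} {g : A ⟶ B} {u v : B ⟶ P}
    (sq : IsPushout g g u v) [PreservesColimit (span g g) (tensorRight T)]
    {m : E ⟶ B} (hm : m ≫ u = m ≫ v) {x y : T ⟶ (ihom B).obj Q}
    (hxy : x ≫ (pre g).app Q = y ≫ (pre g).app Q) :
    x ≫ (pre m).app Q = y ≫ (pre m).app Q := by
  replace hxy := congrArg uncurry hxy
  rw [uncurry_pre_app, uncurry_pre_app] at hxy
  obtain ⟨θ, hu, hv⟩ := (sq.map (tensorRight T)).exists_desc (uncurry x) (uncurry y) hxy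
  apply uncurry_injective
  rw [uncurry_pre_app, uncurry_pre_app]
  dsimp at hu hv
  rw [← hu, ← hv, ← comp_whiskerRight_assoc, hm, comp_whiskerRight_assoc]

lemma regularMono_of_isSplitEpi_pre_app [HasEqualizers V] [HasPushouts V]
    [∀ T : V, (tensorRight T).IsLeftAdjoint]
    (hcons : ∀ {A B : V} (k : A ⟶ B), IsIso ((pre k).app Q) → IsIso k)
    (hepi : ∀ {A B : V} (m : A ⟶ B), Nonempty (RegularMono m) → Epi ((pre m).app Q))
    {A B : V} (g : A ⟶ B) (hg : IsSplitEpi ((pre g).app Q)) : Nonempty (RegularMono g) := by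
  let m := equalizer.ι (pushout.inl g g) (pushout.inr g g)
  let k := equalizer.lift g pushout.condition
  have hkm : k ≫ m = g := equalizer.lift_ι _ _
  have hmk : (pre g).app Q = (pre m).app Q ≫ (pre k).app Q := by
    rw [← NatTrans.comp_app, ← pre_map, hkm]
  have := hepi m ⟨RegularMono.equalizer _ _⟩
  let s := section_ ((pre g).app Q)
  have hs : (pre g).app Q ≫ s ≫ (pre m).app Q = (pre m).app Q := by
    simpa using comp_pre_app_eq_of_isPushout (IsPushout.of_hasPushout g g) (equalizer.condition _ _)
      (x := (pre g).app Q ≫ s) (y := 𝟙 _) (by simp [s])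
  have : IsIso ((pre k).app Q) :=
    ⟨s ≫ (pre m).app Q,
      by rw [← cancel_epi ((pre m).app Q), ← reassoc_of% hmk, hs, Category.comp_id],
      by rw [Category.assoc, ← hmk, IsSplitEpi.id]⟩
  have := hcons k this
  exact ⟨RegularMono.ofArrowIso (Arrow.isoMk (asIso k).symm (Iso.refl _) (by simp [m, ← hkm]))
    (RegularMono.equalizer _ _)⟩

def cyclicHomEquiv {W : V} {R : V ⥤ V} (adj : tensorRight W ⊣ R) (e : (ihom W).obj Q ≅ R.obj Q)
    (X : V) : (X ⊗ W ⟶ Q) ≃ (W ⊗ X ⟶ Q) :=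
  (adj.homEquiv X Q).trans <|
    ((Iso.refl X).homCongr e.symm).trans ((ihom.adjunction W).homEquiv X Q).symm

lemma cyclicHomEquiv_whiskerRight_comp {W : V} {R : V ⥤ V} (adj : tensorRight W ⊣ R)
    (e : (ihom W).obj Q ≅ R.obj Q) {X Y : V} (f : X ⟶ Y) (φ : Y ⊗ W ⟶ Q) :
    cyclicHomEquiv adj e X (f ▷ W ≫ φ) = W ◁ f ≫ cyclicHomEquiv adj e Y φ := by
  have h := adj.homEquiv_naturality_left f φ
  dsimp at h
  simp only [cyclicHomEquiv, Equiv.trans_apply, Iso.homCongr_apply, h, Iso.refl_inv,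
    Category.id_comp, Category.assoc]
  exact (ihom.adjunction W).homEquiv_naturality_left_symm _ _

lemma extendsAlong_whiskerLeft_iff {W : V} {R : V ⥤ V} (adj : tensorRight W ⊣ R)
    (e : (ihom W).obj Q ≅ R.obj Q) {X Y : V} (f : X ⟶ Y) :
    ExtendsAlong Q (W ◁ f) ↔ ExtendsAlong Q (f ▷ W) := by
  have hcomm : (fun χ => W ◁ f ≫ χ) ∘ cyclicHomEquiv adj e Y =
      cyclicHomEquiv adj e X ∘ fun χ => f ▷ W ≫ χ :=
    funext fun φ => (cyclicHomEquiv_whiskerRight_comp adj e f φ).symm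
  rw [ExtendsAlong, ExtendsAlong, ← Equiv.surjective_comp (cyclicHomEquiv adj e Y), hcomm,
    Equiv.comp_surjective]

lemma isSplitEpi_pre_app_whiskerLeft {R : V → V ⥤ V} (adj : ∀ W : V, tensorRight W ⊣ R W)
    (e : ∀ W : V, (ihom W).obj Q ≅ (R W).obj Q) {X Y : V} (f : X ⟶ Y)
    (hf : IsSplitEpi ((pre f).app Q)) (Z : V) : IsSplitEpi ((pre (Z ◁ f)).app Q) := by
  rw [isSplitEpi_pre_app_iff] at hf ⊢
  intro W
  have hZ : ExtendsAlong Q (Z ◁ (f ▷ W)) :=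
    (extendsAlong_whiskerLeft_iff (adj Z) (e Z) (f ▷ W)).2
      ((hf (W ⊗ Z)).of_iso (α_ X W Z).symm (α_ Y W Z).symm (by simp))
  exact hZ.of_iso (α_ Z X W).symm (α_ Z Y W).symm (by simp)

end MonoidalClosed

/-- In a finitely complete and finitely cocomplete monoidal biclosed
category `V` with projective unit, let `Q` be a cyclic object (the functors `{-, Q}` and
`[-, Q]` are naturally isomorphic; write `[[-, Q]]` for this functor), such that
`[[-, Q]] : Vᵒᵖ ⥤ V` is conservative and preserves regular epimorphisms.  Then a
morphism `f : X ⟶ Y` is left pure iff it is right pure, and both hold iff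
`[[f, Q]] : [[Y, Q]] ⟶ [[X, Q]]` is a split epimorphism.

Here the biclosed structure is given by `MonoidalClosed` (providing `{X,-}`, right
adjoint to `X ⊗ -`) together with a bifunctor `ihomL` where `ihomL.obj (op X) = [X,-]`
is right adjoint to `- ⊗ X`, and `[[-,Q]] = ihomL.flip.obj Q`, which is required to be
naturally isomorphic to `{-,Q} = internalHom.flip.obj Q` (cyclicity of `Q`). -/
theorem stmt3 {V : Type*} [Category V] [MonoidalCategory V] [MonoidalClosed V]
    [HasFiniteLimits V] [HasFiniteColimits V]
    -- biclosedness: a bifunctor `[-,-]` with `- ⊗ X ⊣ [X,-]` for all `X`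
    (ihomL : Vᵒᵖ ⥤ V ⥤ V)
    (adjL : ∀ X : V, tensorRight X ⊣ ihomL.obj (op X))
    -- the unit object is projective with respect to regular epimorphisms
    (hproj : ∀ {P B : V} (e : P ⟶ B), Nonempty (RegularEpi e) →
      ∀ g : 𝟙_ V ⟶ B, ∃ g', g' ≫ e = g)
    (Q : V)
    -- `Q` is cyclic: `{-, Q} ≅ [-, Q]`
    (hcyclic : MonoidalClosed.internalHom.flip.obj Q ≅ ihomL.flip.obj Q)
    -- `[[-, Q]] : Vᵒᵖ ⥤ V` is conservative
    (hcons : ∀ {X Y : Vᵒᵖ} (g : X ⟶ Y), IsIso ((ihomL.flip.obj Q).map g) → IsIso g)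
    -- `[[-, Q]] : Vᵒᵖ ⥤ V` preserves regular epimorphisms
    (hregepi : ∀ {X Y : Vᵒᵖ} (g : X ⟶ Y), Nonempty (RegularEpi g) →
      Nonempty (RegularEpi ((ihomL.flip.obj Q).map g)))
    {X Y : V} (f : X ⟶ Y) :
    ((∀ Z : V, Nonempty (RegularMono (Z ◁ f))) ↔
        (∀ Z : V, Nonempty (RegularMono (f ▷ Z)))) ∧
      ((∀ Z : V, Nonempty (RegularMono (Z ◁ f))) ↔
        IsSplitEpi ((ihomL.flip.obj Q).map f.op)) := by
  have hregEpi : ∀ {A B : V} (h : A ⟶ B), Nonempty (RegularMono h) →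
      Nonempty (RegularEpi ((pre h).app Q)) := fun h ⟨hh⟩ =>
    (hregepi h.op ⟨hh.op⟩).map (RegularEpi.ofArrowIso (Arrow.isoOfNatIso hcyclic.symm (.mk h.op)))
  have hext : ∀ {A B : V} (h : A ⟶ B), Nonempty (RegularMono h) → ExtendsAlong Q h :=
    fun h hh => (extendsAlong_iff_surjective_pre_app h).2 (hproj _ (hregEpi h hh))
  have hconsPre : ∀ {A B : V} (k : A ⟶ B), IsIso ((pre k).app Q) → IsIso k := fun k hk =>
    have := hcons k.op ((NatIso.isIso_map_iff hcyclic k.op).1 hk)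
    isIso_of_op k
  have : ∀ T : V, (tensorRight T).IsLeftAdjoint := fun T => (adjL T).isLeftAdjoint
  have hreg : ∀ {A B : V} (g : A ⟶ B), IsSplitEpi ((pre g).app Q) → Nonempty (RegularMono g) :=
    regularMono_of_isSplitEpi_pre_app hconsPre fun m hm => (hregEpi m hm).some.epi
  have hleft : (∀ Z : V, Nonempty (RegularMono (Z ◁ f))) ↔ IsSplitEpi ((pre f).app Q) :=
    ⟨fun h => (isSplitEpi_pre_app_iff f).2 fun W =>
        (extendsAlong_whiskerLeft_iff (adjL W) (hcyclic.app (op W)) f).1 (hext _ (h W)),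
      fun h Z => hreg _ (isSplitEpi_pre_app_whiskerLeft adjL (fun W => hcyclic.app (op W)) f h Z)⟩
  have hright : (∀ Z : V, Nonempty (RegularMono (f ▷ Z))) ↔ IsSplitEpi ((pre f).app Q) :=
    ⟨fun h => (isSplitEpi_pre_app_iff f).2 fun W => hext _ (h W),
      fun h Z => hreg _ (isSplitEpi_pre_app_whiskerRight f h Z)⟩
  exact ⟨hleft.trans hright.symm, hleft.trans (NatIso.isSplitEpi_map_iff hcyclic f.op)⟩
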